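/- (Theorem 1, case Δ_W = 1.) Let τ ∈ (0,1], let V₀, …, V_{h−1} be finite sets with V₀ nonempty, let P_i = V₀ ∪ ⋯ ∪ V_i (with P_{−1} = ∅), let λ = |P_{h−1}| and λ₀ = |V₀|. Suppose that (i) for every 1 ≤ i ≤ h−1 the Jaccard similarity of P_{i−1} and V_i is at least τ, i.e. |P_{i−1} ∩ V_i| ≥ τ·|P_{i−1} ∪ V_i|, and (ii) λ ≤ λ₀/(1 − τ/2). Then the density of the group after removing empty columns satisfies (Σ_{i=0}^{h−1} |V_i|) / (h·λ) ≥ τ/2. -/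

import Mathlib

open Finset

/-!
Every row after the first has Jaccard similarity at least `τ` with a pattern containing `V₀`,
so it has at least `τ·λ₀` nonzeros, and the group has at least `λ₀(1 + (h-1)τ)` nonzeros.
Condition (ii) bounds the width by `λ ≤ 2λ₀/(2-τ)`, and the claim reduces to
`(1 + (h-1)τ)(2-τ) - hτ = (1-τ)(2 + (h-1)τ) ≥ 0`.
-/

theorem mul_card_le_card_of_mul_card_union_le_card_inter {α : Type*} [DecidableEq α]
    {A B : Finset α} {τ : ℝ} (hτ : 0 ≤ τ) (hAB : τ * #(A ∪ B) ≤ #(A ∩ B)) :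
    τ * #A ≤ #B :=
  calc τ * #A ≤ τ * #(A ∪ B) := by gcongr; exact subset_union_left
    _ ≤ #(A ∩ B) := hAB
    _ ≤ #B := by exact_mod_cast card_le_card inter_subset_right

theorem add_nsmul_le_sum_range_succ {M : Type*} [AddCommMonoid M] [PartialOrder M]
    [IsOrderedAddMonoid M] {f : ℕ → M} {c : M} (n : ℕ) (hf : ∀ i < n, c ≤ f (i + 1)) :
    f 0 + n • c ≤ ∑ i ∈ range (n + 1), f i := by
  rw [sum_range_succ', add_comm]
  gcongr
  simpa using card_nsmul_le_sum (range n) (fun i ↦ f (i + 1)) c (by simpa using hf)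

theorem half_mul_le_of_mul_sub_half_le {τ n l₀ l : ℝ} (hτ0 : 0 ≤ τ) (hτ1 : τ ≤ 1) (hn : 0 ≤ n)
    (hl₀ : 0 ≤ l₀) (hl : l * (1 - τ / 2) ≤ l₀) :
    τ / 2 * ((n + 1) * l) ≤ l₀ + n * (τ * l₀) := by
  nlinarith [mul_le_mul_of_nonneg_left hl (by positivity : 0 ≤ τ * (n + 1)),
    mul_nonneg hl₀ (mul_nonneg (sub_nonneg.2 hτ1) (by positivity : 0 ≤ 2 + n * τ))]

/-- **Theorem 1, case `Δ_W = 1`.** Let `τ ∈ (0,1]`, let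
`V₀, …, V_{h−1}` be finite sets with `V₀` nonempty, let `P i = V₀ ∪ ⋯ ∪ V i`
(so `(range i).biUnion V = P (i−1)`, with `P (−1) = ∅`), `λ = |P (h−1)|`,
`λ₀ = |V₀|`. Suppose (i) for every `1 ≤ i ≤ h−1` the Jaccard similarity of
`P (i−1)` and `V i` is at least `τ`, and (ii) `λ ≤ λ₀/(1 − τ/2)`. Then the
density of the group after removing empty columns satisfies
`(∑_{i=0}^{h−1} |V i|) / (h·λ) ≥ τ/2`. -/
theorem group_density_ge (τ : ℝ) (hτ0 : 0 < τ) (hτ1 : τ ≤ 1)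
    {α : Type*} [DecidableEq α] (h : ℕ) (hh : 1 ≤ h)
    (V : ℕ → Finset α) (hV0 : (V 0).Nonempty)
    (hsim : ∀ i, 1 ≤ i → i ≤ h - 1 →
      ((((Finset.range i).biUnion V) ∩ V i).card : ℝ)
        ≥ τ * ((((Finset.range i).biUnion V) ∪ V i).card : ℝ))
    (hgrow : ((((Finset.range h).biUnion V).card : ℝ))
        ≤ ((V 0).card : ℝ) / (1 - τ / 2)) :
    (∑ i ∈ Finset.range h, ((V i).card : ℝ))
        / ((h : ℝ) * (((Finset.range h).biUnion V).card : ℝ)) ≥ τ / 2 := by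
  obtain ⟨n, rfl⟩ := Nat.exists_eq_add_of_le' hh
  have hV0_sub : ∀ i, 1 ≤ i → V 0 ⊆ (range i).biUnion V :=
    fun i hi ↦ subset_biUnion_of_mem V (mem_range.2 hi)
  have hl₀ : (0 : ℝ) < #(V 0) := by exact_mod_cast hV0.card_pos
  have hl : (0 : ℝ) < #((range (n + 1)).biUnion V) :=
    hl₀.trans_le (by exact_mod_cast card_le_card (hV0_sub _ le_add_self))
  have hrow : ∀ i < n, τ * #(V 0) ≤ #(V (i + 1)) := fun i hi ↦
    calc τ * #(V 0) ≤ τ * #((range (i + 1)).biUnion V) := by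
          gcongr; exact hV0_sub _ le_add_self
      _ ≤ #(V (i + 1)) := mul_card_le_card_of_mul_card_union_le_card_inter hτ0.le
          (hsim (i + 1) le_add_self (by omega))
  have hsum := add_nsmul_le_sum_range_succ (f := fun i ↦ (#(V i) : ℝ)) n hrow
  rw [nsmul_eq_mul] at hsum
  rw [le_div_iff₀ (by linarith)] at hgrow
  rw [ge_iff_le, le_div_iff₀ (by positivity)]
  push_cast
  exact (half_mul_le_of_mul_sub_half_le hτ0.le hτ1 n.cast_nonneg hl₀.le hgrow).trans hsum
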